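/- Assume the scaling function satisfies the decay bound |φ̂(ω)| ≤ C_φ/ω for all ω > 0. Then for every N×N permutation matrix P and every f ∈ ℂ^N, ‖Q_J (P f − f)‖ ≤ C_φ 2^{−J} λ₁^{−1} ‖P f − f‖; consequently ‖Q_J (P f − f)‖ ≤ C_φ 2^{−J} λ₁^{−1} ‖P − I‖ ‖f‖, where ‖P − I‖ is the operator norm. -/

import Mathlib

open scoped BigOperators

noncomputable section

/-- Signals on a graph with `N` vertices. -/
abbrev GV (N : ℕ) := EuclideanSpace ℂ (Fin N)

/-- Entrywise absolute value (modulus) of a signal. -/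
def absVec {N : ℕ} (f : GV N) : GV N := WithLp.toLp 2 (fun n => ((‖f n‖ : ℝ) : ℂ))

/-- The low-pass wavelet operator `Q_J f = ∑ l, φ̂(2^J λ_l) (u_l^* f) u_l`. -/
def Qlow {N : ℕ} (J : ℤ) (phiHat : ℝ → ℂ) (lam : Fin N → ℝ) (u : Fin N → GV N)
    (f : GV N) : GV N :=
  ∑ l, (phiHat ((2:ℝ) ^ J * lam l) * (inner ℂ (u l) f : ℂ)) • u l

/-- The band-pass wavelet operator `Q_j f = ∑ l, ψ̂(2^{-j} λ_l) (u_l^* f) u_l`. -/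
def Qband {N : ℕ} (psiHat : ℝ → ℂ) (lam : Fin N → ℝ) (u : Fin N → GV N) (j : ℤ)
    (f : GV N) : GV N :=
  ∑ l, (psiHat ((2:ℝ) ^ (-j) * lam l) * (inner ℂ (u l) f : ℂ)) • u l

/-- Admissible scales: integers `j > -J`. -/
abbrev Scale (J : ℤ) := {j : ℤ // -J < j}

/-- The scattering propagator `U[p] = U[j_m] ∘ ⋯ ∘ U[j₁]` along a path `p = (j₁, …, j_m)`,
where `U[j] f = |Q_j f|` entrywise; `U[∅] f = f`. -/
def Uprop {N : ℕ} {J : ℤ} (psiHat : ℝ → ℂ) (lam : Fin N → ℝ) (u : Fin N → GV N)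
    (p : List (Scale J)) (f : GV N) : GV N :=
  p.foldl (fun g j => absVec (Qband psiHat lam u j.1 g)) f

/-- The windowed scattering transform `S[p] f = Q_J (U[p] f)`. -/
def Sop {N : ℕ} (J : ℤ) (phiHat psiHat : ℝ → ℂ) (lam : Fin N → ℝ) (u : Fin N → GV N)
    (p : List (Scale J)) (f : GV N) : GV N :=
  Qlow J phiHat lam u (Uprop psiHat lam u p f)

/-- Action of the `N×N` permutation matrix `P` associated with `σ` on a signal:
`(P f)(n) = f(σ⁻¹ n)`. -/
def permVec {N : ℕ} (σ : Equiv.Perm (Fin N)) (f : GV N) : GV N := WithLp.toLp 2 (fun n => f (σ⁻¹ n))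

/-- The permutation matrix `P` of `σ`, as a continuous linear map on `ℂ^N`
(so that `‖·‖` is the operator norm). -/
def permCLM {N : ℕ} (σ : Equiv.Perm (Fin N)) : GV N →L[ℂ] GV N :=
  LinearMap.toContinuousLinearMap
    { toFun := permVec σ
      map_add' := fun _ _ => rfl
      map_smul' := fun _ _ => rfl }

/-! A permutation preserves the sum of the entries of a signal, so `Pf - f` is orthogonal to the
constant eigenvector `u₀`: only eigenvalues `λ_l ≥ λ₁` enter `Q_J (Pf - f)`, and for those the
decay bound gives `|φ̂(2^J λ_l)| ≤ C_φ 2^{-J} λ₁⁻¹`. Bessel's inequality turns this bound on the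
multipliers into the first estimate; the second follows from `‖Pf - f‖ ≤ ‖P - I‖ ‖f‖`. -/

open scoped InnerProductSpace

section Orthonormal

variable {𝕜 E ι : Type*} [RCLike 𝕜] [NormedAddCommGroup E] [InnerProductSpace 𝕜 E]
  {v : ι → E}

theorem Orthonormal.norm_sum_smul_sq (hv : Orthonormal 𝕜 v) (c : ι → 𝕜) (s : Finset ι) :
    ‖∑ i ∈ s, c i • v i‖ ^ 2 = ∑ i ∈ s, ‖c i‖ ^ 2 := by
  rw [@norm_sq_eq_re_inner 𝕜, hv.inner_sum, map_sum]
  refine Finset.sum_congr rfl fun i _ => ?_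
  rw [RCLike.conj_mul]
  norm_cast

theorem Orthonormal.norm_sum_mul_inner_smul_le (hv : Orthonormal 𝕜 v) (m : ι → 𝕜) (x : E)
    (s : Finset ι) {K : ℝ} (hK : 0 ≤ K) (hm : ∀ i ∈ s, ⟪v i, x⟫_𝕜 ≠ 0 → ‖m i‖ ≤ K) :
    ‖∑ i ∈ s, (m i * ⟪v i, x⟫_𝕜) • v i‖ ≤ K * ‖x‖ := by
  have hterm : ∀ i ∈ s, ‖m i * ⟪v i, x⟫_𝕜‖ ^ 2 ≤ K ^ 2 * ‖⟪v i, x⟫_𝕜‖ ^ 2 := by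
    intro i hi
    rw [norm_mul, mul_pow]
    by_cases hx : ⟪v i, x⟫_𝕜 = 0
    · simp [hx]
    · gcongr
      exact hm i hi hx
  refine le_of_sq_le_sq ?_ (by positivity)
  calc ‖∑ i ∈ s, (m i * ⟪v i, x⟫_𝕜) • v i‖ ^ 2
      = ∑ i ∈ s, ‖m i * ⟪v i, x⟫_𝕜‖ ^ 2 := hv.norm_sum_smul_sq _ s
    _ ≤ ∑ i ∈ s, K ^ 2 * ‖⟪v i, x⟫_𝕜‖ ^ 2 := Finset.sum_le_sum hterm
    _ = K ^ 2 * ∑ i ∈ s, ‖⟪v i, x⟫_𝕜‖ ^ 2 := (Finset.mul_sum ..).symm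
    _ ≤ K ^ 2 * ‖x‖ ^ 2 := by gcongr; exact hv.sum_inner_products_le x
    _ = (K * ‖x‖) ^ 2 := (mul_pow ..).symm

end Orthonormal

theorem norm_apply_mul_le_of_le_div {φ : ℝ → ℂ} {C : ℝ} (hC : 0 ≤ C)
    (hdecay : ∀ ω : ℝ, 0 < ω → ‖φ ω‖ ≤ C / ω) {s a t : ℝ} (hs : 0 < s) (ha : 0 < a)
    (hat : a ≤ t) : ‖φ (s * t)‖ ≤ C * s⁻¹ * a⁻¹ := by
  calc ‖φ (s * t)‖ ≤ C / (s * t) := hdecay _ (mul_pos hs (ha.trans_le hat))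
    _ ≤ C / (s * a) := by gcongr
    _ = C * s⁻¹ * a⁻¹ := by rw [div_eq_mul_inv, mul_inv, mul_assoc]

theorem norm_Qlow_le_of_spectral_gap {N : ℕ} (J : ℤ) (phiHat : ℝ → ℂ) (lam : Fin N → ℝ)
    {u : Fin N → GV N} (hu : Orthonormal ℂ u) {C a : ℝ} (hC : 0 ≤ C) (ha : 0 < a)
    (hdecay : ∀ ω : ℝ, 0 < ω → ‖phiHat ω‖ ≤ C / ω) (g : GV N)
    (hgap : ∀ l, ⟪u l, g⟫_ℂ ≠ 0 → a ≤ lam l) :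
    ‖Qlow J phiHat lam u g‖ ≤ C * (2:ℝ) ^ (-J) * a⁻¹ * ‖g‖ := by
  refine hu.norm_sum_mul_inner_smul_le _ g _ (by positivity) fun l _ hl => ?_
  rw [zpow_neg]
  exact norm_apply_mul_le_of_le_div hC hdecay (by positivity) ha (hgap l hl)

theorem sum_permVec {N : ℕ} (σ : Equiv.Perm (Fin N)) (f : GV N) :
    ∑ n, permVec σ f n = ∑ n, f n :=
  Equiv.sum_comp σ⁻¹ f

theorem inner_permVec_sub_self_of_const {N : ℕ} {v : GV N} {c : ℂ} (hv : ∀ n, v n = c)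
    (σ : Equiv.Perm (Fin N)) (f : GV N) : ⟪v, permVec σ f - f⟫_ℂ = 0 := by
  simp only [PiLp.inner_apply, RCLike.inner_apply, hv, PiLp.sub_apply, ← Finset.sum_mul,
    Finset.sum_sub_distrib, sum_permVec, sub_self, zero_mul]

theorem permCLM_sub_id_apply {N : ℕ} (σ : Equiv.Perm (Fin N)) (f : GV N) :
    (permCLM σ - ContinuousLinearMap.id ℂ (GV N)) f = permVec σ f - f :=
  rfl

/-- under the decay bound `|φ̂(ω)| ≤ C_φ/ω` for `ω > 0`,
`‖Q_J(Pf - f)‖ ≤ C_φ 2^{-J} λ₁⁻¹ ‖Pf - f‖ ≤ C_φ 2^{-J} λ₁⁻¹ ‖P - I‖ ‖f‖`. -/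
theorem Qlow_perm_difference_bound
    (N : ℕ) (hN : 2 ≤ N)
    (J : ℤ) (phiHat : ℝ → ℂ)
    (lam : Fin N → ℝ) (u : Fin N → GV N) (α : ℂ)
    -- orthonormal eigenbasis of the graph Laplacian
    (hu : Orthonormal ℂ u)
    -- eigenvalues `0 = λ₀ < λ₁ ≤ ⋯ ≤ λ_{N-1}`
    (hmono : Monotone lam)
    (hlam1 : 0 < lam ⟨1, by omega⟩)
    -- `u₀ = α (1,…,1)ᵀ/√N` with `|α| = 1`
    (hu0 : ∀ n, u ⟨0, by omega⟩ n = α / (Real.sqrt N : ℂ))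
    (Cphi : ℝ) (hCphi : 0 < Cphi)
    (hdecay : ∀ ω : ℝ, 0 < ω → ‖phiHat ω‖ ≤ Cphi / ω)
    (σ : Equiv.Perm (Fin N)) (f : GV N) :
    ‖Qlow J phiHat lam u (permVec σ f - f)‖
        ≤ Cphi * (2:ℝ) ^ (-J) * (lam ⟨1, by omega⟩)⁻¹ * ‖permVec σ f - f‖
    ∧ ‖Qlow J phiHat lam u (permVec σ f - f)‖
        ≤ Cphi * (2:ℝ) ^ (-J) * (lam ⟨1, by omega⟩)⁻¹
          * ‖permCLM σ - ContinuousLinearMap.id ℂ (GV N)‖ * ‖f‖ := by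
  have hmean := inner_permVec_sub_self_of_const hu0 σ f
  have hgap : ∀ l, ⟪u l, permVec σ f - f⟫_ℂ ≠ 0 → lam ⟨1, by omega⟩ ≤ lam l := by
    intro l hl
    have hl0 : l ≠ ⟨0, by omega⟩ := by rintro rfl; exact hl hmean
    exact hmono (Fin.le_def.mpr (Nat.one_le_iff_ne_zero.mpr (Fin.val_ne_iff.mpr hl0)))
  have key := norm_Qlow_le_of_spectral_gap J phiHat lam hu hCphi.le hlam1 hdecay _ hgap
  refine ⟨key, key.trans ?_⟩
  rw [mul_assoc _ ‖_‖]
  gcongr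
  exact permCLM_sub_id_apply σ f ▸ ContinuousLinearMap.le_opNorm _ f

end
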